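/- arXiv:0909.4493 — 6 statements merged into one kernel-verified Lean document; each statement's English description precedes it below -/
import Mathlib

section
/- Let L be a sup-lattice and R ⊆ L × L. Then S = {x ∈ L | for all (r₁,r₂) ∈ R, r₁ ≤ x iff r₂ ≤ x} is closed under arbitrary meets, and the quotient of L by the sup-lattice congruence generated by R is isomorphic to the sup-lattice (S, γ_S ∘ ⋁, γ_S(⊥)). -/
/-!
The set `S` consists of the closed elements of the closure operator `γ`, so the kernel of `γ` is
a sup-congruence, and it identifies both sides of every pair in `R`. Conversely, let `r` be a
sup-congruence containing `R`. The join `m` of the `r`-class of `z` lies in that class and belongs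
to `S`, since `r a b` and `b ≤ m` force `a ⊔ m` into the class of `m`. Hence `z ≤ γ z ≤ m`, and as
the classes of a sup-congruence are convex, `z` is `r`-related to `γ z`.
-/

def IsSupCongruence {L : Type*} [CompleteLattice L] (r : L → L → Prop) : Prop :=
  Equivalence r ∧
    ∀ S : Set (L × L), (∀ p ∈ S, r p.1 p.2) →
      r (sSup (Prod.fst '' S)) (sSup (Prod.snd '' S))

section

variable {L : Type*} [CompleteLattice L]

namespace ClosureOperator

theorem closure_sSup_image_closure (c : ClosureOperator L) (A : Set L) :
    c (sSup (c '' A)) = c (sSup A) := by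
  rw [sSup_image, sSup_eq_iSup]
  exact c.closure_iSup₂_closure _

theorem isSupCongruence_ker (c : ClosureOperator L) : IsSupCongruence fun x y => c x = c y := by
  refine ⟨⟨fun _ => rfl, Eq.symm, Eq.trans⟩, fun T hT => ?_⟩
  have himage : c '' (Prod.fst '' T) = c '' (Prod.snd '' T) := by
    simp only [Set.image_image]
    exact Set.image_congr hT
  show c _ = c _
  rw [← c.closure_sSup_image_closure, himage, c.closure_sSup_image_closure]

end ClosureOperator

def saturatedSet (R : Set (L × L)) : Set L :=
  {x | ∀ p ∈ R, (p.1 ≤ x ↔ p.2 ≤ x)}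

theorem sInf_mem_saturatedSet {R : Set (L × L)} {T : Set L} (hT : T ⊆ saturatedSet R) :
    sInf T ∈ saturatedSet R := fun p hp => by
  simp only [le_sInf_iff]
  exact forall₂_congr fun t ht => hT ht p hp

def saturation (R : Set (L × L)) : ClosureOperator L :=
  ClosureOperator.ofCompletePred (· ∈ saturatedSet R) fun _ hT => sInf_mem_saturatedSet hT

theorem saturation_apply (R : Set (L × L)) (x : L) :
    saturation R x = sInf {y | y ∈ saturatedSet R ∧ x ≤ y} :=
  ((saturation R).closure_isGLB x).unique (isGLB_sInf _) |>.trans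
    (congrArg sInf (Set.ext fun _ => and_comm))

theorem saturation_fst_eq_snd {R : Set (L × L)} {p : L × L} (hp : p ∈ R) :
    saturation R p.1 = saturation R p.2 :=
  le_antisymm
    (ClosureOperator.closure_min (((saturation R).isClosed_closure p.2 p hp).2
      ((saturation R).le_closure p.2)) ((saturation R).isClosed_closure p.2))
    (ClosureOperator.closure_min (((saturation R).isClosed_closure p.1 p hp).1
      ((saturation R).le_closure p.1)) ((saturation R).isClosed_closure p.1))

namespace IsSupCongruence

variable {r : L → L → Prop} (hr : IsSupCongruence r)
include hr

theorem sup_right {a b : L} (hab : r a b) (c : L) : r (a ⊔ c) (b ⊔ c) := by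
  have h := hr.2 {(a, b), (c, c)} (by
    rintro p (rfl | rfl)
    · exact hab
    · exact hr.1.refl c)
  simpa only [Set.image_insert_eq, Set.image_singleton, sSup_insert, sSup_singleton] using h

theorem of_le_of_le {a b c : L} (hac : r a c) (hab : a ≤ b) (hbc : b ≤ c) : r a b := by
  have hbc' := hr.sup_right hac b
  rw [sup_eq_right.2 hab, sup_eq_left.2 hbc] at hbc'
  exact hr.1.trans hac (hr.1.symm hbc')

theorem sSup_class_rel (z : L) : r (sSup {w | r w z}) z := by
  have h := hr.2 ({w | r w z} ×ˢ {z}) fun p hp => (Set.mem_singleton_iff.1 hp.2) ▸ hp.1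
  rwa [Set.fst_image_prod _ (Set.singleton_nonempty z), Set.snd_image_prod (s := {w | r w z}) ⟨z, hr.1.refl z⟩,
    sSup_singleton] at h

theorem le_sSup_class_of_rel {a b z : L} (hab : r a b) (hb : b ≤ sSup {w | r w z}) :
    a ≤ sSup {w | r w z} := by
  have h := hr.sup_right hab (sSup {w | r w z})
  rw [sup_eq_right.2 hb] at h
  exact le_sup_left.trans (le_sSup (hr.1.trans h (hr.sSup_class_rel z)))

theorem sSup_class_mem_saturatedSet {R : Set (L × L)} (hR : ∀ p ∈ R, r p.1 p.2) (z : L) :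
    sSup {w | r w z} ∈ saturatedSet R := fun p hp =>
  ⟨hr.le_sSup_class_of_rel (hr.1.symm (hR p hp)), hr.le_sSup_class_of_rel (hR p hp)⟩

theorem rel_saturation {R : Set (L × L)} (hR : ∀ p ∈ R, r p.1 p.2) (z : L) :
    r z (saturation R z) :=
  hr.of_le_of_le (hr.1.symm (hr.sSup_class_rel z)) ((saturation R).le_closure z)
    (ClosureOperator.closure_min (le_sSup (hr.1.refl z)) (hr.sSup_class_mem_saturatedSet hR z))

theorem rel_of_saturation_eq {R : Set (L × L)} (hR : ∀ p ∈ R, r p.1 p.2) {x y : L}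
    (hxy : saturation R x = saturation R y) : r x y := by
  have hy := hr.1.symm (hr.rel_saturation hR y)
  rw [← hxy] at hy
  exact hr.1.trans (hr.rel_saturation hR x) hy

end IsSupCongruence

end

theorem stmt_6 (L : Type*) [CompleteLattice L] (R : Set (L × L))
    (S : Set L) (hS : S = {x : L | ∀ p ∈ R, (p.1 ≤ x ↔ p.2 ≤ x)})
    (γ : L → L) (hγ : γ = fun x => sInf {y | y ∈ S ∧ x ≤ y}) :
    (∀ T ⊆ S, sInf T ∈ S) ∧
      (∀ x : L, γ x ∈ S) ∧ (∀ s ∈ S, γ s = s) ∧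
      ∃ r : L → L → Prop,
        IsSupCongruence r ∧ (∀ p ∈ R, r p.1 p.2) ∧
          (∀ r' : L → L → Prop, IsSupCongruence r' → (∀ p ∈ R, r' p.1 p.2) →
            ∀ x y : L, r x y → r' x y) ∧
          ∀ x y : L, r x y ↔ γ x = γ y := by
  change S = saturatedSet R at hS
  subst hS
  obtain rfl : γ = saturation R := hγ.trans (funext fun x => (saturation_apply R x).symm)
  exact ⟨fun _ hT => sInf_mem_saturatedSet hT, (saturation R).isClosed_closure,
    fun _ hs => ClosureOperator.IsClosed.closure_eq hs, fun x y => saturation R x = saturation R y,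
    (saturation R).isSupCongruence_ker, fun _ hp => saturation_fst_eq_snd hp,
    fun _ hr hR _ _ => hr.rel_of_saturation_eq hR, fun _ _ => Iff.rfl⟩
end

section
/- For sup-lattices L₁, L₂, L₃, the sup-lattice of homomorphisms Hom(L₁ ⊗ L₂, L₃) is isomorphic to Hom(L₁, Hom(L₂, L₃)). -/
/-! Precomposition with the universal bimorphism `τ` sends sup-homomorphisms `T → L₃` to
bimorphisms; the universal property says exactly that this map is bijective. It also reflects
the order: if `h ∘ τ ≤ h' ∘ τ`, then the sup-homomorphism `h ⊔ h'` agrees with `h'` on `τ`,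
so `h ⊔ h' = h'` by uniqueness of the lift. -/

universe u

def IsSupHom {A B : Type*} [CompleteLattice A] [CompleteLattice B] (f : A → B) : Prop :=
  ∀ S : Set A, f (sSup S) = ⨆ x ∈ S, f x

def IsBimorphism {A B C : Type*} [CompleteLattice A] [CompleteLattice B] [CompleteLattice C]
    (f : A → B → C) : Prop :=
  (∀ (S : Set A) (b : B), f (sSup S) b = ⨆ a ∈ S, f a b) ∧
    ∀ (a : A) (S : Set B), f a (sSup S) = ⨆ b ∈ S, f a b

/-- `(T, τ)` is a tensor product of the sup-lattices `A` and `B`: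
`τ` is the universal bimorphism out of `A × B`. -/
def IsSLTensor (A B : Type u) [CompleteLattice A] [CompleteLattice B]
    (T : Type u) [CompleteLattice T] (τ : A → B → T) : Prop :=
  IsBimorphism τ ∧
    ∀ (C : Type u) [CompleteLattice C] (f : A → B → C),
      IsBimorphism f → ∃! h : T → C, IsSupHom h ∧ ∀ a b, h (τ a b) = f a b

section SupHom

variable {A B : Type*} [CompleteLattice A] [CompleteLattice B] {h h' : A → B}

lemma IsSupHom.map_biSup (hh : IsSupHom h) {ι : Type*} (S : Set ι) (g : ι → A) :
    h (⨆ i ∈ S, g i) = ⨆ i ∈ S, h (g i) := by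
  rw [← sSup_image, hh, iSup_image]

lemma IsSupHom.sup (hh : IsSupHom h) (hh' : IsSupHom h') : IsSupHom (fun a => h a ⊔ h' a) := by
  intro S
  simp only [hh S, hh' S, iSup_sup_eq]

lemma IsBimorphism.comp_isSupHom {C D : Type*} [CompleteLattice C] [CompleteLattice D]
    {f : A → B → C} (hf : IsBimorphism f) {h : C → D} (hh : IsSupHom h) :
    IsBimorphism (fun a b => h (f a b)) :=
  ⟨fun S b => by simp only [hf.1 S b, hh.map_biSup],
    fun a S => by simp only [hf.2 a S, hh.map_biSup]⟩

end SupHom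

namespace IsSLTensor

variable {A B T C : Type u} [CompleteLattice A] [CompleteLattice B] [CompleteLattice T]
  [CompleteLattice C] {τ : A → B → T}

lemma ext (hT : IsSLTensor A B T τ) {h h' : T → C} (hh : IsSupHom h) (hh' : IsSupHom h')
    (heq : ∀ a b, h (τ a b) = h' (τ a b)) : h = h' :=
  (hT.2 C _ (hT.1.comp_isSupHom hh')).unique ⟨hh, heq⟩ ⟨hh', fun _ _ => rfl⟩

lemma le_of_comp_le (hT : IsSLTensor A B T τ) {h h' : T → C} (hh : IsSupHom h)
    (hh' : IsSupHom h') (hle : ∀ a b, h (τ a b) ≤ h' (τ a b)) : h ≤ h' := by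
  have hsup : (fun t => h t ⊔ h' t) = h' :=
    hT.ext (hh.sup hh') hh' fun a b => sup_eq_right.mpr (hle a b)
  exact fun t => hsup ▸ le_sup_left

end IsSLTensor

/-- `Hom(L₁, Hom(L₂, L₃))` is modelled as the bimorphisms `L₁ × L₂ → L₃`, ordered pointwise. -/
theorem stmt_7 (L₁ L₂ L₃ : Type u) [CompleteLattice L₁] [CompleteLattice L₂] [CompleteLattice L₃]
    (T : Type u) [CompleteLattice T] (τ : L₁ → L₂ → T) (hT : IsSLTensor L₁ L₂ T τ) :
    Nonempty ({h : T → L₃ // IsSupHom h} ≃o {f : L₁ → L₂ → L₃ // IsBimorphism f}) := by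
  let precomp : {h : T → L₃ // IsSupHom h} → {f : L₁ → L₂ → L₃ // IsBimorphism f} :=
    fun h => ⟨fun a b => h.1 (τ a b), hT.1.comp_isSupHom h.2⟩
  have hbij : Function.Bijective precomp := by
    refine ⟨fun h h' heq => Subtype.ext (hT.ext h.2 h'.2 fun a b => ?_), fun f => ?_⟩
    · exact congrFun (congrFun (congrArg Subtype.val heq) a) b
    · obtain ⟨h, hh, hτ⟩ := (hT.2 L₃ f.1 f.2).exists
      exact ⟨⟨h, hh⟩, Subtype.ext (funext₂ hτ)⟩
  exact ⟨⟨Equiv.ofBijective precomp hbij, fun {h h'} =>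
    ⟨fun hle => hT.le_of_comp_le h.2 h'.2 fun a b => hle a b, fun hle a b => hle _⟩⟩⟩
end

section
/- For sup-lattices L₁ and L₂: (i) Hom(L₁, L₂) is isomorphic to (L₂^op ⊗ L₁)^op, and (ii) L₁ ⊗ L₂ is isomorphic to Hom(L₁, L₂^op)^op. Consequently the tensor product of sup-lattices is commutative up to isomorphism. -/
universe u

/-!
Model `A ⊗ B` as the order dual of the complete lattice of sup-preserving maps `A → Bᵒᵈ`, with
`a ⊗ b` the map that, read in `B`, sends `⊥` to `⊤`, the rest of `Iic a` to `b` and everything else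
to `⊥`. Everything rests on `φ ≤ a ⊗ b ↔ b ≤ φ a`: it gives that `⊗` turns sups in either variable
into infs, and that `φ = ⨅ a, a ⊗ φ a`, so pure tensors generate. A bimorphism `f` lifts to
`φ ↦ ⨆ x, f x (φ x)`, which preserves sups because it is left adjoint to
`c ↦ (x ↦ the largest y with f x y ≤ c)`.
Tensor products are unique up to isomorphism and symmetric in their factors; this gives (ii) and
commutativity, and (i) is (ii) for `L₁` and `L₂ᵒᵈ`.
-/

open OrderDual

namespace IsSupHom

variable {A B : Type*} [CompleteLattice A] [CompleteLattice B] {f : A → B}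

theorem iff_map_sSup : IsSupHom f ↔ ∀ s : Set A, f (sSup s) = sSup (f '' s) := by
  simp only [IsSupHom, sSup_image]

def toSSupHom (hf : IsSupHom f) : sSupHom A B := ⟨f, iff_map_sSup.1 hf⟩

theorem monotone (hf : IsSupHom f) : Monotone f := OrderHomClass.mono hf.toSSupHom

theorem map_iSup (hf : IsSupHom f) {ι : Sort*} (x : ι → A) : f (⨆ i, x i) = ⨆ i, f (x i) :=
  _root_.map_iSup hf.toSSupHom x

theorem le_iff_le_sSup (hf : IsSupHom f) {x : A} {y : B} : f x ≤ y ↔ x ≤ sSup {x | f x ≤ y} :=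
  ⟨fun h => le_sSup h, fun h => (hf.monotone h).trans <| by rw [hf]; exact iSup₂_le fun _ h => h⟩

end IsSupHom

theorem sSupHom.isSupHom {A B : Type*} [CompleteLattice A] [CompleteLattice B] (g : sSupHom A B) :
    IsSupHom g :=
  IsSupHom.iff_map_sSup.2 (map_sSup g)

theorem IsSupHom.comp {A B C : Type*} [CompleteLattice A] [CompleteLattice B] [CompleteLattice C]
    {g : B → C} {f : A → B} (hg : IsSupHom g) (hf : IsSupHom f) : IsSupHom (g ∘ f) :=
  (hg.toSSupHom.comp hf.toSSupHom).isSupHom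

theorem isSupHom_id {A : Type*} [CompleteLattice A] : IsSupHom (id : A → A) :=
  (sSupHom.id A).isSupHom

def supHomOrderIso (A B : Type*) [CompleteLattice A] [CompleteLattice B] :
    {f : A → B // IsSupHom f} ≃o sSupHom A B where
  toFun f := f.2.toSSupHom
  invFun g := ⟨g, g.isSupHom⟩
  left_inv _ := rfl
  right_inv _ := rfl
  map_rel_iff' := Iff.rfl

namespace sSupHom

variable {α β : Type*} [SupSet α] [CompleteLattice β]

instance : SupSet (sSupHom α β) where
  sSup S := ⟨fun a => ⨆ f ∈ S, f a, fun s => by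
    simp only [map_sSup, sSup_image]; exact iSup₂_comm _⟩

theorem le_def {f g : sSupHom α β} : f ≤ g ↔ ∀ a, f a ≤ g a := Iff.rfl

instance : CompleteLattice (sSupHom α β) :=
  completeLatticeOfSup _ fun _ =>
    ⟨fun f hf => le_def.2 fun _ => le_iSup₂_of_le f hf le_rfl,
      fun _ hg => le_def.2 fun a => iSup₂_le fun _ hf => le_def.1 (hg hf) a⟩

end sSupHom

section PureTensor

variable {A B : Type*} [CompleteLattice A] [CompleteLattice B]

open Classical in
noncomputable def pureTensorFun (a : A) (b : B) (x : A) : B :=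
  if x = ⊥ then ⊤ else if x ≤ a then b else ⊥

theorem le_pureTensorFun_iff {a x : A} {b y : B} :
    y ≤ pureTensorFun a b x ↔ x = ⊥ ∨ y = ⊥ ∨ (x ≤ a ∧ y ≤ b) := by
  unfold pureTensorFun
  split_ifs with hx hxa
  · simp [hx]
  · simp only [hx, hxa, true_and, false_or]
    exact (or_iff_right_of_imp fun hy => hy ▸ bot_le).symm
  · simp [hx, hxa]

theorem gc_pureTensorFun (a : A) (b : B) :
    GaloisConnection (toDual ∘ pureTensorFun a b) (pureTensorFun b a ∘ ofDual) := fun x y => by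
  simp only [Function.comp_apply, toDual_le, le_pureTensorFun_iff]
  tauto

noncomputable def pureTensor (a : A) (b : B) : sSupHom A Bᵒᵈ :=
  ⟨toDual ∘ pureTensorFun a b, fun s => by rw [(gc_pureTensorFun a b).l_sSup, sSup_image]⟩

theorem le_pureTensor_iff {a : A} {b : B} (φ : sSupHom A Bᵒᵈ) :
    φ ≤ pureTensor a b ↔ b ≤ ofDual (φ a) := by
  refine ⟨fun h => ?_, fun h x => le_toDual.2 ?_⟩
  · by_cases ha : a = ⊥
    · simp [ha]
    · simpa [pureTensorFun, ha] using le_toDual.1 (sSupHom.le_def.1 h a)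
  · unfold pureTensorFun
    split_ifs with hx hxa
    · simp [hx]
    · exact h.trans (OrderHomClass.mono φ hxa)
    · exact bot_le

theorem pureTensor_sSup_left (s : Set A) (b : B) :
    pureTensor (sSup s) b = ⨅ a ∈ s, pureTensor a b :=
  eq_of_forall_le_iff fun φ => by
    rw [le_pureTensor_iff, φ.isSupHom s]
    simp [le_pureTensor_iff]

theorem pureTensor_sSup_right (a : A) (s : Set B) :
    pureTensor a (sSup s) = ⨅ b ∈ s, pureTensor a b :=
  eq_of_forall_le_iff fun φ => by
    simp [le_pureTensor_iff]

theorem iInf_pureTensor (φ : sSupHom A Bᵒᵈ) : ⨅ a, pureTensor a (ofDual (φ a)) = φ :=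
  eq_of_forall_le_iff fun ψ => by
    simp only [le_iInf_iff, le_pureTensor_iff, ofDual_le_ofDual]
    rfl

theorem isBimorphism_pureTensor :
    IsBimorphism (fun a b => toDual (pureTensor a b) : A → B → (sSupHom A Bᵒᵈ)ᵒᵈ) :=
  ⟨fun s b => by simp [pureTensor_sSup_left], fun a s => by simp [pureTensor_sSup_right]⟩

end PureTensor

def tensorLift {A B C : Type*} [CompleteLattice A] [CompleteLattice B] [CompleteLattice C]
    (f : A → B → C) (φ : (sSupHom A Bᵒᵈ)ᵒᵈ) : C :=
  ⨆ x, f x (ofDual (ofDual φ x))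

namespace IsBimorphism

variable {A B C : Type*} [CompleteLattice A] [CompleteLattice B] [CompleteLattice C]
  {f : A → B → C}

theorem isSupHom_right (hf : IsBimorphism f) (a : A) : IsSupHom (f a) := hf.2 a

theorem swap (hf : IsBimorphism f) : IsBimorphism (fun b a => f a b) :=
  ⟨fun S a => hf.2 a S, fun b S => hf.1 S b⟩

noncomputable def residual (hf : IsBimorphism f) (c : C) : sSupHom A Bᵒᵈ :=
  ⟨fun x => toDual (sSup {y | f x y ≤ c}), fun s => by
    apply ofDual.injective
    refine eq_of_forall_le_iff fun y => ?_
    simp only [ofDual_toDual, ← (hf.isSupHom_right _).le_iff_le_sSup, hf.1 s y, iSup₂_le_iff,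
      sSup_image, ofDual_iSup, le_iInf_iff]⟩

theorem le_residual_iff (hf : IsBimorphism f) {c : C} {x : A} {y : B} :
    y ≤ ofDual (hf.residual c x) ↔ f x y ≤ c :=
  (hf.isSupHom_right x).le_iff_le_sSup.symm

theorem gc_tensorLift (hf : IsBimorphism f) :
    GaloisConnection (tensorLift f) (fun c => toDual (hf.residual c)) := fun φ c => by
  simp only [tensorLift, iSup_le_iff, le_toDual, sSupHom.le_def, ← hf.le_residual_iff]
  rfl

theorem tensorLift_pureTensor (hf : IsBimorphism f) (a : A) (b : B) :
    tensorLift f (toDual (pureTensor a b)) = f a b :=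
  eq_of_forall_ge_iff fun c => by
    rw [hf.gc_tensorLift, toDual_le_toDual, le_pureTensor_iff, hf.le_residual_iff]

end IsBimorphism

theorem isSLTensor_pureTensor (A B : Type u) [CompleteLattice A] [CompleteLattice B] :
    IsSLTensor A B (sSupHom A Bᵒᵈ)ᵒᵈ (fun a b => toDual (pureTensor a b)) := by
  refine ⟨isBimorphism_pureTensor, fun C _ f hf => ?_⟩
  refine ⟨tensorLift f, ⟨fun _ => hf.gc_tensorLift.l_sSup, hf.tensorLift_pureTensor⟩, ?_⟩
  rintro g ⟨hg, hgf⟩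
  funext φ
  rw [← toDual_ofDual φ, ← iInf_pureTensor (ofDual φ), toDual_iInf, hg.map_iSup,
    hf.gc_tensorLift.l_iSup]
  simp only [hgf, hf.tensorLift_pureTensor]

namespace IsSLTensor

variable {A B T T' : Type u} [CompleteLattice A] [CompleteLattice B] [CompleteLattice T]
  [CompleteLattice T'] {τ : A → B → T} {τ' : A → B → T'}

theorem swap (h : IsSLTensor A B T τ) : IsSLTensor B A T (fun b a => τ a b) := by
  refine ⟨h.1.swap, fun C _ f hf => ?_⟩
  obtain ⟨k, ⟨hk, hkf⟩, hk_unique⟩ := h.2 C (fun a b => f b a) hf.swap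
  exact ⟨k, ⟨hk, fun b a => hkf a b⟩, fun k' ⟨hk', hk'f⟩ => hk_unique k' ⟨hk', fun a b => hk'f b a⟩⟩

theorem comp_eq_id {φ : T → T'} {ψ : T' → T} (h : IsSLTensor A B T τ) (hφ : IsSupHom φ)
    (hψ : IsSupHom ψ) (hφτ : ∀ a b, φ (τ a b) = τ' a b) (hψτ : ∀ a b, ψ (τ' a b) = τ a b) :
    ψ ∘ φ = id :=
  (h.2 T τ h.1).unique ⟨hψ.comp hφ, fun a b => by simp [hφτ, hψτ]⟩ ⟨isSupHom_id, fun _ _ => rfl⟩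

theorem nonempty_orderIso (h : IsSLTensor A B T τ) (h' : IsSLTensor A B T' τ') :
    Nonempty (T ≃o T') := by
  obtain ⟨φ, ⟨hφ, hφτ⟩, -⟩ := h.2 T' τ' h'.1
  obtain ⟨ψ, ⟨hψ, hψτ⟩, -⟩ := h'.2 T τ h.1
  exact ⟨Equiv.toOrderIso
    ⟨φ, ψ, congrFun (h.comp_eq_id hφ hψ hφτ hψτ), congrFun (h'.comp_eq_id hψ hφ hψτ hφτ)⟩
    hφ.monotone hψ.monotone⟩

end IsSLTensor

/-- (i) `Hom(L₁, L₂) ≅ (L₂ᵒᵖ ⊗ L₁)ᵒᵖ`; (ii) `L₁ ⊗ L₂ ≅ Hom(L₁, L₂ᵒᵖ)ᵒᵖ`;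
consequently the tensor product is commutative up to isomorphism. -/
theorem stmt_8 (L₁ L₂ : Type u) [CompleteLattice L₁] [CompleteLattice L₂]
    (T₁ : Type u) [CompleteLattice T₁] (τ₁ : L₂ᵒᵈ → L₁ → T₁) (hT₁ : IsSLTensor L₂ᵒᵈ L₁ T₁ τ₁)
    (T₂ : Type u) [CompleteLattice T₂] (τ₂ : L₁ → L₂ → T₂) (hT₂ : IsSLTensor L₁ L₂ T₂ τ₂)
    (T₃ : Type u) [CompleteLattice T₃] (τ₃ : L₂ → L₁ → T₃) (hT₃ : IsSLTensor L₂ L₁ T₃ τ₃) :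
    Nonempty ({f : L₁ → L₂ // IsSupHom f} ≃o T₁ᵒᵈ) ∧
      Nonempty (T₂ ≃o ({f : L₁ → L₂ᵒᵈ // IsSupHom f})ᵒᵈ) ∧
      Nonempty (T₂ ≃o T₃) := by
  obtain ⟨e₁⟩ := (isSLTensor_pureTensor L₁ L₂ᵒᵈ).nonempty_orderIso hT₁.swap
  obtain ⟨e₂⟩ := hT₂.nonempty_orderIso (isSLTensor_pureTensor L₁ L₂)
  -- `{f : L₁ → L₂ // IsSupHom f}` and `{f : L₁ → L₂ᵒᵈᵒᵈ // IsSupHom f}` agree definitionally.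
  refine ⟨⟨(supHomOrderIso L₁ L₂ᵒᵈᵒᵈ).trans ((OrderIso.dualDual _).trans e₁.dual)⟩,
    ⟨e₂.trans (supHomOrderIso L₁ L₂ᵒᵈ).symm.dual⟩, hT₂.nonempty_orderIso hT₃.swap⟩
end

section
/- Let M be a Q-module and γ a closure operator on M. Then γ is structural (q ⋆ γ(m) ≤ γ(q ⋆ m)) if and only if γ(q ⋆ γ(m)) = γ(q ⋆ m) for all q, m, if and only if γ(m) /⋆ n = γ(m) /⋆ γ(n) for all m, n, if and only if γ(q \⋆ m) ≤ q \⋆ γ(m) for all q, m, if and only if q \⋆ γ(m) is γ-closed for all q, m. -/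
universe u v w

/-- A (unital) quantale: a sup-lattice with a monoid multiplication distributing
over arbitrary joins on both sides. -/
class Quantale' (Q : Type u) extends CompleteLattice Q, Monoid Q where
  mul_sSup : ∀ (a : Q) (s : Set Q), a * SupSet.sSup s = ⨆ b ∈ s, a * b
  sSup_mul : ∀ (s : Set Q) (a : Q), SupSet.sSup s * a = ⨆ b ∈ s, b * a

/-- A left module over a quantale `Q`: a sup-lattice with an action of `Q`
distributing over arbitrary joins in both arguments and compatible with the
monoid structure of `Q`. -/
class QModule (Q : Type u) [Quantale' Q] (M : Type v) [CompleteLattice M] extends SMul Q M where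
  mul_smul' : ∀ (a b : Q) (m : M), (a * b) • m = a • b • m
  smul_sSup : ∀ (a : Q) (s : Set M), a • sSup s = ⨆ m ∈ s, a • m
  sSup_smul : ∀ (s : Set Q) (m : M), (sSup s : Q) • m = ⨆ a ∈ s, a • m
  one_smul' : ∀ m : M, (1 : Q) • m = m

/-- The residual `q \⋆ m = ⋁ {n | q ⋆ n ≤ m}`. -/
def lres {Q : Type u} [Quantale' Q] {M : Type v} [CompleteLattice M] [QModule Q M]
    (q : Q) (m : M) : M :=
  sSup {n : M | q • n ≤ m}

/-- The residual `m /⋆ n = ⋁ {q | q ⋆ n ≤ m}`. -/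
def rres {Q : Type u} [Quantale' Q] {M : Type v} [CompleteLattice M] [QModule Q M]
    (m n : M) : Q :=
  sSup {q : Q | q • n ≤ m}

/-- The left residual `q \ r = ⋁ {s | q · s ≤ r}` of the quantale multiplication. -/
def qlres {Q : Type u} [Quantale' Q] (q r : Q) : Q :=
  sSup {s : Q | q * s ≤ r}

/-!
Structurality is the lax commutation `f (c x) ≤ d (f x)` of the monotone map `f = (q ⋆ -)` with
the closure. For any monotone `f` this is equivalent to `d (f (c x)) = d (f x)` and, testing
against closed elements, to `f x ≤ d y ↔ f (c x) ≤ d y`, which through the adjunction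
`- ⋆ n ⊣ - /⋆ n` is the equation for `/⋆`. When `f` has a right adjoint `u` (here `q \⋆ -`),
transposing gives `c (u y) ≤ u (d y)`, equivalently `u (d y)` is `c`-closed.
-/

namespace ClosureOperator

variable {α β : Type*} [PartialOrder α] [PartialOrder β] (c : ClosureOperator α)
  (d : ClosureOperator β)

theorem map_closure_le_iff_closure_map_closure_eq {f : α → β} (hf : Monotone f) :
    (∀ x, f (c x) ≤ d (f x)) ↔ ∀ x, d (f (c x)) = d (f x) := by
  refine ⟨fun h x => le_antisymm ?_ (d.monotone (hf (c.le_closure x))), fun h x => ?_⟩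
  · simpa only [d.idempotent] using d.monotone (h x)
  · exact (h x).symm ▸ d.le_closure (f (c x))

theorem map_closure_le_iff_map_le_closure_iff {f : α → β} (hf : Monotone f) :
    (∀ x, f (c x) ≤ d (f x)) ↔ ∀ x y, f x ≤ d y ↔ f (c x) ≤ d y := by
  refine ⟨fun h x y => ⟨fun hxy => ?_, (hf (c.le_closure x)).trans⟩, fun h x => ?_⟩
  · exact (h x).trans (d.closure_min hxy (d.isClosed_closure y))
  · exact (h x (f x)).1 (d.le_closure (f x))

end ClosureOperator

namespace GaloisConnection

variable {α β : Type*} [PartialOrder α] [PartialOrder β] {l : α → β} {u : β → α}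
  (c : ClosureOperator α) (d : ClosureOperator β)

theorem map_closure_le_iff_closure_comap_le (gc : GaloisConnection l u) :
    (∀ x, l (c x) ≤ d (l x)) ↔ ∀ y, c (u y) ≤ u (d y) := by
  refine ⟨fun h y => gc.le_iff_le.1 ?_, fun h x => gc.le_iff_le.2 ?_⟩
  · exact (h (u y)).trans (d.monotone (gc.l_u_le y))
  · exact (c.monotone (gc.le_u_l x)).trans (h (l x))

theorem map_closure_le_iff_isClosed_comap_closure (gc : GaloisConnection l u) :
    (∀ x, l (c x) ≤ d (l x)) ↔ ∀ y, c.IsClosed (u (d y)) := by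
  rw [gc.map_closure_le_iff_closure_comap_le]
  refine ⟨fun h y => c.isClosed_iff_closure_le.2 ?_, fun h y => ?_⟩
  · simpa only [d.idempotent] using h (d y)
  · exact c.closure_min (gc.monotone_u (d.le_closure y)) (h y)

end GaloisConnection

namespace QModule

variable {Q : Type*} [Quantale' Q] {M : Type*} [CompleteLattice M] [QModule Q M]

theorem smul_left_mono (q : Q) : Monotone (q • · : M → M) := fun n n' h => by
  have hpair := smul_sSup (M := M) q {n, n'}
  rw [sSup_pair, sup_eq_right.2 h, iSup_pair] at hpair
  exact le_sup_left.trans_eq hpair.symm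

theorem smul_right_mono (n : M) : Monotone (· • n : Q → M) := fun q q' h => by
  have hpair := sSup_smul (M := M) {q, q'} n
  rw [sSup_pair, sup_eq_right.2 h, iSup_pair] at hpair
  exact le_sup_left.trans_eq hpair.symm

theorem smul_lres_le (q : Q) (m : M) : q • lres q m ≤ m := by
  rw [lres, smul_sSup]
  exact iSup₂_le fun _ hn => hn

theorem rres_smul_le (m n : M) : rres (Q := Q) m n • n ≤ m := by
  rw [rres, sSup_smul]
  exact iSup₂_le fun _ hq => hq

theorem gc_smul_lres (q : Q) : GaloisConnection (q • · : M → M) (lres q) := fun _ m =>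
  ⟨fun h => le_sSup h, fun h => (smul_left_mono q h).trans (smul_lres_le q m)⟩

theorem gc_smul_rres (n : M) : GaloisConnection (· • n : Q → M) (rres · n) := fun _ m =>
  ⟨fun h => le_sSup h, fun h => (smul_right_mono n h).trans (rres_smul_le m n)⟩

theorem rres_eq_rres_iff (m n n' : M) :
    rres (Q := Q) m n = rres m n' ↔ ∀ q : Q, q • n ≤ m ↔ q • n' ≤ m := by
  refine ⟨fun h q => (gc_smul_rres n).le_iff_le.trans ?_,
    fun h => eq_of_forall_le_iff fun q => ?_⟩
  · exact h ▸ (gc_smul_rres n').le_iff_le.symm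
  · exact (gc_smul_rres n).le_iff_le.symm.trans ((h q).trans (gc_smul_rres n').le_iff_le)

end QModule

theorem stmt_15 {Q : Type u} [Quantale' Q] {M : Type v} [CompleteLattice M] [QModule Q M]
    (γ : M → M) (hmono : Monotone γ) (hext : ∀ m, m ≤ γ m) (hidem : ∀ m, γ (γ m) = γ m) :
    List.TFAE
      [∀ (q : Q) (m : M), q • γ m ≤ γ (q • m),
        ∀ (q : Q) (m : M), γ (q • γ m) = γ (q • m),
        ∀ m n : M, rres (Q := Q) (γ m) n = rres (Q := Q) (γ m) (γ n),
        ∀ (q : Q) (m : M), γ (lres q m) ≤ lres q (γ m),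
        ∀ (q : Q) (m : M), γ (lres q (γ m)) = lres q (γ m)] := by
  let c : ClosureOperator M :=
    { toFun := γ, monotone' := hmono, le_closure' := hext, idempotent' := hidem }
  tfae_have 1 ↔ 2 := forall_congr' fun q =>
    c.map_closure_le_iff_closure_map_closure_eq c (QModule.smul_left_mono q)
  tfae_have 1 ↔ 3 := (forall_congr' fun q =>
    c.map_closure_le_iff_map_le_closure_iff c (QModule.smul_left_mono q)).trans
      ⟨fun h m n => (QModule.rres_eq_rres_iff _ _ _).2 fun q => h q n m,
        fun h q n m => (QModule.rres_eq_rres_iff _ _ _).1 (h m n) q⟩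
  tfae_have 1 ↔ 4 := forall_congr' fun q =>
    (QModule.gc_smul_lres q).map_closure_le_iff_closure_comap_le c c
  tfae_have 1 ↔ 5 := forall_congr' fun q =>
    (QModule.gc_smul_lres q).map_closure_le_iff_isClosed_comap_closure c c
  tfae_finish
end

section
/- If f: M → N is a Q-module homomorphism, then f_* ∘ f is a structural closure operator (nucleus) on M. Conversely, for any nucleus γ on a Q-module M, the image M_γ carries a Q-module structure (join γ ∘ ⋁, action γ ∘ ⋆, bottom γ(⊥)) and the map m ↦ γ(m) is a Q-module homomorphism f_γ: M → M_γ with (f_γ)_* ∘ f_γ = γ. -/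
universe u v w

/-! A homomorphism `f` with right adjoint `f_*` gives the closure `f_* ∘ f`, and the action passes
through it because `f` commutes with `q ⋆ -` while `f ∘ f_*` is deflationary. Conversely, a nucleus
`γ` corestricted to its fixed points is left adjoint to the inclusion, hence preserves joins, and
`q ⋆ γ m ≤ γ (q ⋆ m)` together with idempotence makes `γ (q ⋆ γ m) = γ (q ⋆ m)`. -/

section

variable {Q : Type u} [Quantale' Q]

theorem QModule.smul_mono_right {M : Type v} [CompleteLattice M] [QModule Q M] (q : Q) :
    Monotone fun m : M => q • m := by
  intro a b hab
  have hpair : sSup ({a, b} : Set M) = b := by simp [sSup_insert, hab]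
  calc q • a ≤ ⨆ m ∈ ({a, b} : Set M), q • m := le_iSup₂_of_le a (by simp) le_rfl
    _ = q • b := by rw [← QModule.smul_sSup, hpair]

theorem GaloisConnection.smul_u_l_le {M : Type v} {N : Type w} [CompleteLattice M]
    [CompleteLattice N] [QModule Q M] [QModule Q N] {f : M → N} {g : N → M}
    (gc : GaloisConnection f g) (hsmul : ∀ (q : Q) (m : M), f (q • m) = q • f m) (q : Q) (m : M) :
    q • g (f m) ≤ g (f (q • m)) :=
  gc.le_u <| by
    rw [hsmul, hsmul]
    exact QModule.smul_mono_right q (gc.l_u_le (f m))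

theorem closure_smul_closure_eq {M : Type v} [CompleteLattice M] [QModule Q M] {γ : M → M}
    (hmono : Monotone γ) (hle : ∀ m, m ≤ γ m) (hidem : ∀ m, γ (γ m) = γ m)
    (hnuc : ∀ (q : Q) (m : M), q • γ m ≤ γ (q • m)) (q : Q) (m : M) :
    γ (q • γ m) = γ (q • m) :=
  le_antisymm
    (calc γ (q • γ m) ≤ γ (γ (q • m)) := hmono (hnuc q m)
      _ = γ (q • m) := hidem _)
    (hmono (QModule.smul_mono_right q (hle m)))

end

section

variable {α : Type*} {γ : α → α}

def toFixedPoints (hidem : ∀ a, γ (γ a) = γ a) (a : α) : {a : α // γ a = a} :=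
  ⟨γ a, hidem a⟩

theorem toFixedPoints_surjective (hidem : ∀ a, γ (γ a) = γ a) :
    Function.Surjective (toFixedPoints hidem) :=
  fun x => ⟨x, Subtype.ext x.2⟩

theorem galoisConnection_toFixedPoints [Preorder α] (hmono : Monotone γ) (hle : ∀ a, a ≤ γ a)
    (hidem : ∀ a, γ (γ a) = γ a) :
    GaloisConnection (toFixedPoints hidem) Subtype.val :=
  fun a x => ⟨fun h => (hle a).trans h, fun h => (hmono h).trans x.2.le⟩

end

theorem stmt_16_general {Q : Type u} [Quantale' Q] {M : Type v} {N : Type w}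
    [CompleteLattice M] [CompleteLattice N] [QModule Q M] [QModule Q N]
    (f : M → N) (g : N → M)
    (hsmul : ∀ (q : Q) (m : M), f (q • m) = q • f m)
    (adj : ∀ (x : M) (y : N), f x ≤ y ↔ x ≤ g y) :
    (Monotone (g ∘ f) ∧ (∀ m : M, m ≤ g (f m)) ∧ (∀ m : M, g (f (g (f m))) = g (f m)) ∧
        ∀ (q : Q) (m : M), q • g (f m) ≤ g (f (q • m))) ∧
      ∀ γ : M → M, Monotone γ → (∀ m, m ≤ γ m) → (∀ m, γ (γ m) = γ m) →
        (∀ (q : Q) (m : M), q • γ m ≤ γ (q • m)) →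
        ∃ fγ : M → {m : M // γ m = m},
          (∀ m : M, (fγ m : M) = γ m) ∧
            Function.Surjective fγ ∧
            (∀ S : Set M, IsLUB (fγ '' S) (fγ (sSup S))) ∧
            (∀ (q : Q) (m : M), γ (q • γ m) = γ (q • m)) ∧
            ∀ (m : M) (x : {m : M // γ m = m}), fγ m ≤ x ↔ m ≤ (x : M) := by
  have gc : GaloisConnection f g := adj
  refine ⟨⟨gc.monotone_u.comp gc.monotone_l, gc.le_u_l, fun m => gc.u_l_u_eq_u (f m),
    gc.smul_u_l_le hsmul⟩, fun γ hmono hle hidem hnuc => ?_⟩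
  have gcγ := galoisConnection_toFixedPoints hmono hle hidem
  exact ⟨toFixedPoints hidem, fun _ => rfl, toFixedPoints_surjective hidem,
    fun S => gcγ.isLUB_l_image (isLUB_sSup S), closure_smul_closure_eq hmono hle hidem hnuc, gcγ⟩

theorem stmt_16 {Q : Type u} [Quantale' Q] {M : Type v} {N : Type w}
    [CompleteLattice M] [CompleteLattice N] [QModule Q M] [QModule Q N]
    (f : M → N) (g : N → M)
    (hsup : ∀ S : Set M, f (sSup S) = ⨆ x ∈ S, f x)
    (hsmul : ∀ (q : Q) (m : M), f (q • m) = q • f m)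
    (adj : ∀ (x : M) (y : N), f x ≤ y ↔ x ≤ g y) :
    (Monotone (g ∘ f) ∧ (∀ m : M, m ≤ g (f m)) ∧ (∀ m : M, g (f (g (f m))) = g (f m)) ∧
        ∀ (q : Q) (m : M), q • g (f m) ≤ g (f (q • m))) ∧
      ∀ γ : M → M, Monotone γ → (∀ m, m ≤ γ m) → (∀ m, γ (γ m) = γ m) →
        (∀ (q : Q) (m : M), q • γ m ≤ γ (q • m)) →
        ∃ fγ : M → {m : M // γ m = m},
          (∀ m : M, (fγ m : M) = γ m) ∧
            Function.Surjective fγ ∧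
            (∀ S : Set M, IsLUB (fγ '' S) (fγ (sSup S))) ∧
            (∀ (q : Q) (m : M), γ (q • γ m) = γ (q • m)) ∧
            ∀ (m : M) (x : {m : M // γ m = m}), fγ m ≤ x ↔ m ≤ (x : M) :=
  stmt_16_general f g hsmul adj
end

section
/- For a quantale Q and nonempty sets X, Y, the sup-lattice of Q-module homomorphisms Hom_Q(Q^X, Q^Y) is isomorphic to Q^{X×Y}, via the map sending a kernel p ∈ Q^{X×Y} to the transform H_p defined by H_p(f)(y) = ⋁_{x∈X} f(x)·p(x,y). -/
universe u v w

/-- A `Q`-module homomorphism between the free modules `Q^X` and `Q^Y`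
(with pointwise joins and pointwise scalar action `(q • f) x = q * f x`). -/
def IsFreeModHom {Q : Type u} [Quantale' Q] {X Y : Type v}
    (h : (X → Q) → (Y → Q)) : Prop :=
  (∀ S : Set (X → Q), h (sSup S) = ⨆ f ∈ S, h f) ∧
    ∀ (q : Q) (f : X → Q), h (fun x => q * f x) = fun y => q * h f y

/- Every `f : X → Q` is the join `⋁ₓ f x · δₓ` of scaled Dirac functions, so a
homomorphism `h : Q^X → Q^Y` is determined by its kernel `(x, y) ↦ h δₓ y` and equals the
transform of that kernel; conversely the transform of `p` sends `δₓ` to `p (x, ·)`.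
Both passages are monotone, because multiplication in a quantale is. -/

namespace Quantale'

variable {Q : Type u} [Quantale' Q]

theorem mul_iSup {ι : Sort w} (a : Q) (f : ι → Q) : a * ⨆ i, f i = ⨆ i, a * f i := by
  rw [← sSup_range, mul_sSup, iSup_range]

theorem iSup_mul {ι : Sort w} (f : ι → Q) (a : Q) : (⨆ i, f i) * a = ⨆ i, f i * a := by
  rw [← sSup_range, sSup_mul, iSup_range]

theorem mul_bot (a : Q) : a * ⊥ = ⊥ := by
  simpa using mul_sSup a ∅

theorem bot_mul (a : Q) : ⊥ * a = ⊥ := by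
  simpa using sSup_mul ∅ a

theorem mul_le_mul_left' (c : Q) {a b : Q} (h : a ≤ b) : c * a ≤ c * b := by
  have hsup : c * (a ⊔ b) = c * a ⊔ c * b := by
    rw [← sSup_pair, mul_sSup, iSup_pair]
  rw [sup_eq_right.2 h] at hsup
  exact hsup ▸ le_sup_left

open scoped Classical in
/-- The Dirac function `δₓ`, the `x`-th basis vector of the free module `Q^X`. -/
noncomputable def dirac {X : Type*} (x : X) : X → Q := fun x' => if x' = x then 1 else ⊥

theorem iSup_mul_dirac {X : Type*} (f : X → Q) (x' : X) :
    ⨆ x, f x * dirac x x' = f x' := by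
  refine le_antisymm (iSup_le fun x => ?_) ?_
  · by_cases h : x' = x
    · subst h; simp [dirac]
    · simp [dirac, h, mul_bot]
  · simpa [dirac] using le_iSup (fun x => f x * dirac (Q := Q) x x') x'

theorem iSup_dirac_mul {X : Type*} (g : X → Q) (x : X) :
    ⨆ x', dirac x x' * g x' = g x := by
  refine le_antisymm (iSup_le fun x' => ?_) ?_
  · by_cases h : x' = x
    · subst h; simp [dirac]
    · simp [dirac, h, bot_mul]
  · simpa [dirac] using le_iSup (fun x' => dirac (Q := Q) x x' * g x') x

theorem eq_iSup_mul_dirac {X : Type*} (f : X → Q) :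
    f = ⨆ x, fun x' => f x * dirac x x' := by
  funext x'
  rw [iSup_apply, iSup_mul_dirac]

/-- The transform `H_p f y = ⋁ₓ f x · p (x, y)` with kernel `p`. -/
noncomputable def kernelTransform {X Y : Type*} (p : X × Y → Q) : (X → Q) → (Y → Q) :=
  fun f y => ⨆ x, f x * p (x, y)

noncomputable def kernelOf {X Y : Type*} (h : (X → Q) → (Y → Q)) : X × Y → Q :=
  fun xy => h (dirac xy.1) xy.2

variable {X Y : Type v}

theorem isFreeModHom_kernelTransform (p : X × Y → Q) : IsFreeModHom (kernelTransform p) := by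
  refine ⟨fun S => ?_, fun q f => ?_⟩
  · funext y
    simp only [kernelTransform, iSup_apply, sSup_apply, iSup_subtype', iSup_mul]
    exact iSup_comm
  · funext y
    simp only [kernelTransform, mul_iSup, mul_assoc]

theorem kernelOf_kernelTransform (p : X × Y → Q) : kernelOf (kernelTransform p) = p := by
  funext xy
  exact iSup_dirac_mul (fun x => p (x, xy.2)) xy.1

theorem kernelTransform_kernelOf_of_isFreeModHom {h : (X → Q) → (Y → Q)} (hh : IsFreeModHom h) :
    kernelTransform (kernelOf h) = h := by
  obtain ⟨h_sSup, h_smul⟩ := hh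
  funext f y
  conv_rhs => rw [eq_iSup_mul_dirac f, ← sSup_range, h_sSup, iSup_range]
  simp only [kernelTransform, kernelOf, h_smul, iSup_apply]

theorem kernelTransform_le_kernelTransform_iff {p p' : X × Y → Q} :
    kernelTransform p ≤ kernelTransform p' ↔ p ≤ p' := by
  refine ⟨fun h xy => ?_, fun h f y => iSup_mono fun x => mul_le_mul_left' (f x) (h (x, y))⟩
  rw [← kernelOf_kernelTransform p, ← kernelOf_kernelTransform p']
  exact h (dirac xy.1) xy.2

noncomputable def kernelTransformOrderIso :
    (X × Y → Q) ≃o {h : (X → Q) → (Y → Q) // IsFreeModHom h} where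
  toFun p := ⟨kernelTransform p, isFreeModHom_kernelTransform p⟩
  invFun h := kernelOf h.1
  left_inv := kernelOf_kernelTransform
  right_inv h := Subtype.ext (kernelTransform_kernelOf_of_isFreeModHom h.2)
  map_rel_iff' := kernelTransform_le_kernelTransform_iff

end Quantale'

theorem stmt_17_general {Q : Type u} [Quantale' Q] (X Y : Type v) :
    ∃ e : (X × Y → Q) ≃o {h : (X → Q) → (Y → Q) // IsFreeModHom h},
      ∀ (p : X × Y → Q) (f : X → Q) (y : Y),
        (e p : (X → Q) → (Y → Q)) f y = ⨆ x : X, f x * p (x, y) :=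
  ⟨Quantale'.kernelTransformOrderIso, fun _ _ _ => rfl⟩

/-- The sup-lattice of `Q`-module homomorphisms `Hom_Q(Q^X, Q^Y)` is isomorphic to
`Q^{X×Y}`, via the map sending a kernel `p` to the transform
`H_p f y = ⋁_x f x * p (x, y)`. -/
theorem stmt_17 {Q : Type u} [Quantale' Q] (X Y : Type v) [Nonempty X] [Nonempty Y] :
    ∃ e : (X × Y → Q) ≃o {h : (X → Q) → (Y → Q) // IsFreeModHom h},
      ∀ (p : X × Y → Q) (f : X → Q) (y : Y),
        (e p : (X → Q) → (Y → Q)) f y = ⨆ x : X, f x * p (x, y) :=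
  stmt_17_general X Y
end
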